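/- Let n ≥ 5 and let C_n^c be a basic extension of the Černý automaton C_n by a map c with |image of c| ≤ n-2. Then C_n^c admits a synchronizing word of length strictly less than (n-1)^2. -/

import Mathlib

/-- Apply a word (list of transition functions) to a state, left to right. -/
def applyWord {α : Type*} (w : List (α → α)) (q : α) : α :=
  w.foldl (fun s f => f s) q

/-- The Černý symbols on `Fin n` (state `i+1` is index `i`). -/
def cernyA (n : ℕ) [NeZero n] : Fin n → Fin n := fun q => q + 1
def cernyB (n : ℕ) [NeZero n] : Fin n → Fin n := fun q => if q = 0 then 1 else q

/-- A word over the alphabet `{a, b, c}` of `C_n^c` which synchronizes. -/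
def ShortSync (n : ℕ) [NeZero n] (c : Fin n → Fin n) (m : ℕ) : Prop :=
  ∃ w : List (Fin n → Fin n),
    (∀ f ∈ w, f = cernyA n ∨ f = cernyB n ∨ f = c) ∧
    (∃ qs : Fin n, ∀ q : Fin n, applyWord w q = qs) ∧
    w.length < m

/-!
States are the indices `0, …, n - 1` of `Fin n`. Since `c` misses at least two states, it
misses some `p ≠ 0`, and after `c a^t` with `t = n - 1 - p` no state sits at `n - 1`. From
there the rest `b (a^(n-1) b)^(n-3)` of the standard synchronizing word of `C_n` finishes the
job: every block `a^(n-1) b` moves each state other than `1` one step down towards `1`. The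
length is at most `1 + (n - 2) + 1 + n (n - 3) = n² - 2n < (n - 1)²`.
-/

open Fin.NatCast

section applyWord

variable {α : Type*}

lemma applyWord_cons (f : α → α) (w : List (α → α)) (q : α) :
    applyWord (f :: w) q = applyWord w (f q) := rfl

lemma applyWord_append (u v : List (α → α)) (q : α) :
    applyWord (u ++ v) q = applyWord v (applyWord u q) := by
  simp [applyWord, List.foldl_append]

lemma applyWord_replicate (f : α → α) (t : ℕ) (q : α) :
    applyWord (List.replicate t f) q = f^[t] q := by
  induction t generalizing q with
  | zero => rfl
  | succ t ih => rw [List.replicate_succ, applyWord_cons, ih, Function.iterate_succ_apply]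

lemma applyWord_flatten_replicate (w : List (α → α)) (k : ℕ) (q : α) :
    applyWord (List.replicate k w).flatten q = (applyWord w)^[k] q := by
  induction k generalizing q with
  | zero => rfl
  | succ k ih =>
    rw [List.replicate_succ, List.flatten_cons, applyWord_append, ih,
      Function.iterate_succ_apply]

end applyWord

section Cerny

variable {n : ℕ} [NeZero n]

lemma cernyA_iterate (t : ℕ) (q : Fin n) : (cernyA n)^[t] q = q + t := by
  induction t with
  | zero => simp
  | succ t ih =>
    rw [Function.iterate_succ_apply', ih, cernyA]
    push_cast
    exact add_assoc _ _ _

lemma val_add_natCast_eq_add {q : Fin n} {t : ℕ} (h : q.val + t < n) :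
    (q + t).val = q.val + t := by
  rw [Fin.val_add, Fin.val_cast_of_lt (by omega), Nat.mod_eq_of_lt h]

lemma val_add_natCast_pred {q : Fin n} (hq : q ≠ 0) :
    (q + ((n - 1 : ℕ) : Fin n)).val = q.val - 1 := by
  have hq' : q.val ≠ 0 := Fin.val_ne_iff.mpr hq
  rw [Fin.val_add, Fin.val_cast_of_lt (by omega),
    show q.val + (n - 1) = (q.val - 1) + n by omega, Nat.add_mod_right,
    Nat.mod_eq_of_lt (by omega)]

lemma val_add_natCast_ne_pred_of_ne {x p : Fin n} (h : x ≠ p) :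
    (x + ((n - 1 - p.val : ℕ) : Fin n)).val ≠ n - 1 := by
  have hp : (p + ((n - 1 - p.val : ℕ) : Fin n)).val = n - 1 := by
    rw [val_add_natCast_eq_add] <;> omega
  exact fun h' => h (add_right_cancel (Fin.ext (h'.trans hp.symm)))

lemma val_cernyB (hn : 2 ≤ n) (q : Fin n) : (cernyB n q).val = max 1 q.val := by
  unfold cernyB
  split_ifs with hq
  · subst hq
    simp [Nat.mod_eq_of_lt (show 1 < n by omega)]
  · have := Fin.val_ne_iff.mpr hq
    simp only [Fin.val_zero] at this
    omega

def cernyBlock (n : ℕ) [NeZero n] : List (Fin n → Fin n) :=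
  List.replicate (n - 1) (cernyA n) ++ [cernyB n]

/-- The suffix of the shortest synchronizing word `b (a^(n-1) b)^(n-2)` of `C_n` after its
prefix `b a^(n-1)`, which maps all states onto those other than `n - 1`. -/
def cernyTail (n : ℕ) [NeZero n] : List (Fin n → Fin n) :=
  cernyB n :: (List.replicate (n - 3) (cernyBlock n)).flatten

lemma val_applyWord_cernyBlock (hn : 2 ≤ n) {q : Fin n} (hq : q ≠ 0) :
    (applyWord (cernyBlock n) q).val = max 1 (q.val - 1) := by
  rw [cernyBlock, applyWord_append, applyWord_replicate, cernyA_iterate]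
  exact (val_cernyB hn _).trans (by rw [val_add_natCast_pred hq])

lemma val_iterate_applyWord_cernyBlock (hn : 2 ≤ n) (k : ℕ) {q : Fin n} (hq : q ≠ 0) :
    ((applyWord (cernyBlock n))^[k] q).val = max 1 (q.val - k) := by
  have hq' : q.val ≠ 0 := Fin.val_ne_iff.mpr hq
  induction k with
  | zero => simp only [Function.iterate_zero, id_eq]; omega
  | succ k ih =>
    have hk : (applyWord (cernyBlock n))^[k] q ≠ 0 := by
      rw [← Fin.val_ne_iff, ih]; simp
    rw [Function.iterate_succ_apply', val_applyWord_cernyBlock hn hk, ih]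
    omega

lemma length_cernyTail : (cernyTail n).length = 1 + (n - 3) * n := by
  simp only [cernyTail, cernyBlock, List.length_cons, List.length_flatten, List.map_replicate,
    List.sum_replicate, List.length_append, List.length_replicate, List.length_nil,
    smul_eq_mul]
  rw [show n - 1 + (0 + 1) = n by have := NeZero.one_le (n := n); omega]
  omega

lemma applyWord_cernyTail (hn : 2 ≤ n) {q : Fin n} (hq : q.val ≠ n - 1) :
    applyWord (cernyTail n) q = 1 := by
  have hb : cernyB n q ≠ 0 := by
    rw [← Fin.val_ne_iff, val_cernyB hn]; simp
  rw [cernyTail, applyWord_cons, applyWord_flatten_replicate, Fin.ext_iff,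
    val_iterate_applyWord_cernyBlock hn _ hb, val_cernyB hn, Fin.val_one',
    Nat.mod_eq_of_lt (by omega)]
  have := q.isLt
  omega

lemma mem_cernyTail {f : Fin n → Fin n} (hf : f ∈ cernyTail n) :
    f = cernyA n ∨ f = cernyB n := by
  simp only [cernyTail, cernyBlock, List.mem_cons, List.mem_flatten, List.mem_replicate] at hf
  aesop

end Cerny

lemma exists_ne_forall_ne_of_card_image_add_one_lt {α β : Type*} [Fintype α] [Fintype β]
    [DecidableEq β] {f : α → β} (hf : (Finset.univ.image f).card + 1 < Fintype.card β)
    (b : β) :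
    ∃ p, p ≠ b ∧ ∀ x, f x ≠ p := by
  have hcard : 1 < (Finset.univ \ Finset.univ.image f).card := by
    rw [Finset.card_sdiff_of_subset (Finset.subset_univ _), Finset.card_univ]
    omega
  obtain ⟨p, hp, hpb⟩ := Finset.exists_mem_ne hcard b
  exact ⟨p, hpb, fun x hx => by simp [← hx] at hp⟩

theorem deficiency_two_short_sync_general (n : ℕ) [NeZero n]
    (c : Fin n → Fin n) (hdef : (Finset.univ.image c).card ≤ n - 2) :
    ShortSync n c ((n - 1) ^ 2) := by
  have hn : 3 ≤ n := by
    have : 0 < (Finset.univ.image c).card := by simp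
    omega
  obtain ⟨p, hp0, hpc⟩ := exists_ne_forall_ne_of_card_image_add_one_lt (f := c)
    (by rw [Fintype.card_fin]; omega) 0
  have hp : 1 ≤ p.val := Nat.one_le_iff_ne_zero.mpr (Fin.val_ne_iff.mpr hp0)
  refine ⟨c :: (List.replicate (n - 1 - p.val) (cernyA n) ++ cernyTail n), ?_,
    ⟨1, fun q => ?_⟩, ?_⟩
  · intro f hf
    simp only [List.mem_cons, List.mem_append, List.mem_replicate] at hf
    rcases hf with h | ⟨-, h⟩ | h
    · exact .inr (.inr h)
    · exact .inl h
    · exact (mem_cernyTail h).imp_right .inl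
  · rw [applyWord_cons, applyWord_append, applyWord_replicate, cernyA_iterate,
      applyWord_cernyTail (by omega) (val_add_natCast_ne_pred_of_ne (hpc q))]
  · rw [List.length_cons, List.length_append, List.length_replicate, length_cernyTail]
    obtain ⟨m, rfl⟩ : ∃ m, n = m + 3 := ⟨n - 3, by omega⟩
    have : m + 2 - p.val ≤ m + 1 := by omega
    simp only [show m + 3 - 1 = m + 2 by omega, Nat.add_sub_cancel]
    nlinarith

/-- let n ≥ 5 and let `C_n^c` be a basic extension of `C_n` by a map `c`
whose image has size at most `n-2`.  Then `C_n^c` admits a synchronizing word of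
length strictly less than `(n-1)²`. -/
theorem deficiency_two_short_sync (n : ℕ) (hn : 5 ≤ n) [NeZero n]
    (c : Fin n → Fin n) (hdef : (Finset.univ.image c).card ≤ n - 2) :
    ShortSync n c ((n - 1) ^ 2) :=
  deficiency_two_short_sync_general n c hdef
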